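/- arXiv:2508.03105 — 2 statements merged into one kernel-verified Lean document; each statement's English description precedes it below -/
import Mathlib

section
/- (Theorem 1, SHB case.) Under the SHB setup below, for every T ∈ ℕ with T ≥ 1, min_{0 ≤ t ≤ T−1} E[‖∇f(θ_t)‖²] ≤ 2(f(θ_0) − f*) · B_T + σ² · V_T, where B_T := 1/(Σ_{t=0}^{T−1} α_t) and V_T := (Σ_{t=0}^{T−1} α_t/b_t)/(Σ_{t=0}^{T−1} α_t). -/
open MeasureTheory Finset
open scoped RealInnerProductSpace NNReal

/-!
Write `G t`, `M t`, `D t`, `F t` for the expectations of `‖∇f(θ_t)‖²`, `‖m_t‖²`,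
`⟪∇f(θ_t), m_t⟫` and `f(θ_t)`. The descent lemma for `L`-smooth functions gives
`F (t+1) ≤ F t - α_t D t + L/2 α_t² M t`. Since `g_t` is conditionally unbiased given `ℱ t` with
conditional variance at most `σ²/b_t`, expanding `m_t = β m_{t-1} + g_t` gives
`M t ≤ β² M (t-1) + 2 D t - G t + σ²/b_t`. Weighting this by `α_t` and using `α_{t+1} ≤ c α_t`
and `L α_t ≤ 1 - cβ²`, the momentum terms are absorbed by the telescoped descent inequality,
leaving `∑ α_t G t ≤ 2 (f θ₀ - f*) + σ² ∑ α_t / b_t`; the minimum is at most the weighted mean.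
-/

theorem le_add_inner_gradient_add_sq_norm {E : Type*} [NormedAddCommGroup E]
    [InnerProductSpace ℝ E] [CompleteSpace E] {f : E → ℝ} {K : ℝ≥0}
    (hf : Differentiable ℝ f) (hK : LipschitzWith K (gradient f)) (x y : E) :
    f y ≤ f x + ⟪gradient f x, y - x⟫ + K / 2 * ‖y - x‖ ^ 2 := by
  set v := y - x
  have hφ : ∀ t : ℝ, HasDerivAt (fun t : ℝ => f (x + t • v) - t * ⟪gradient f x, v⟫)
      (⟪gradient f (x + t • v), v⟫ - ⟪gradient f x, v⟫) t := by
    intro t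
    have hline : HasDerivAt (fun t : ℝ => x + t • v) v t := by
      simpa using ((hasDerivAt_id t).smul_const v).const_add x
    rw [inner_gradient_left, inner_gradient_left]
    exact ((hf _).hasFDerivAt.comp_hasDerivAt t hline).sub
      (hasDerivAt_mul_const (fderiv ℝ f x v))
  have hquad : ∀ t : ℝ,
      HasDerivAt (fun t : ℝ => f x + K / 2 * t ^ 2 * ‖v‖ ^ 2) (K * t * ‖v‖ ^ 2) t := by
    intro t
    refine ((((hasDerivAt_pow 2 t).const_mul ((K : ℝ) / 2)).mul_const (‖v‖ ^ 2)).const_add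
      (f x)).congr_deriv ?_
    push_cast
    ring
  have hcmp := image_le_of_deriv_right_le_deriv_boundary (a := 0) (b := 1)
    (fun t _ => (hφ t).continuousAt.continuousWithinAt) (fun t _ => (hφ t).hasDerivWithinAt)
    (by simp) (fun t _ => (hquad t).continuousAt.continuousWithinAt)
    (fun t _ => (hquad t).hasDerivWithinAt) (fun t ht => ?_) (Set.right_mem_Icc.2 zero_le_one)
  · simp only [one_smul, one_mul, one_pow] at hcmp
    rw [add_sub_cancel] at hcmp
    linarith
  · calc ⟪gradient f (x + t • v), v⟫ - ⟪gradient f x, v⟫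
        = ⟪gradient f (x + t • v) - gradient f x, v⟫ := (inner_sub_left _ _ _).symm
      _ ≤ ‖gradient f (x + t • v) - gradient f x‖ * ‖v‖ := real_inner_le_norm _ _
      _ ≤ K * ‖t • v‖ * ‖v‖ := by
          gcongr
          simpa [dist_eq_norm] using hK.dist_le_mul (x + t • v) x
      _ = K * t * ‖v‖ ^ 2 := by rw [norm_smul, Real.norm_of_nonneg ht.1]; ring

namespace MeasureTheory

variable {Ω E : Type*} {m mΩ : MeasurableSpace Ω} {P : Measure Ω}
  [NormedAddCommGroup E] [InnerProductSpace ℝ E]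

theorem MemLp.integrable_inner {X Y : Ω → E}
    (hX : MemLp X 2 P) (hY : MemLp Y 2 P) : Integrable (fun ω => ⟪X ω, Y ω⟫) P :=
  memLp_one_iff_integrable.1 <| hX.of_bilin (fun x y => ⟪x, y⟫) 1 hY
    (hX.1.inner hY.1) (.of_forall fun _ => by simpa using nnnorm_inner_le_nnnorm _ _)

theorem integral_norm_add_sq {X Y : Ω → E} (hX : MemLp X 2 P) (hY : MemLp Y 2 P) :
    ∫ ω, ‖X ω + Y ω‖ ^ 2 ∂P
      = ∫ ω, ‖X ω‖ ^ 2 ∂P + 2 * ∫ ω, ⟪X ω, Y ω⟫ ∂P + ∫ ω, ‖Y ω‖ ^ 2 ∂P := by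
  have hX2 := hX.integrable_norm_pow two_ne_zero
  have hY2 := hY.integrable_norm_pow two_ne_zero
  have hXY := (hX.integrable_inner hY).const_mul 2
  simp_rw [norm_add_sq_real]
  rw [integral_add (hX2.fun_add hXY) hY2, integral_add hX2 hXY, integral_const_mul]

theorem integral_le_of_ae_condExp_le [IsProbabilityMeasure P] (hm : m ≤ mΩ) {X : Ω → ℝ} {c : ℝ}
    (hX : ∀ᵐ ω ∂P, P[X|m] ω ≤ c) : ∫ ω, X ω ∂P ≤ c := by
  rw [← integral_condExp hm]
  simpa using integral_mono_ae integrable_condExp (integrable_const c) hX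

variable [IsFiniteMeasure P] [CompleteSpace E]

theorem integral_inner_eq_of_condExp_ae_eq (hm : m ≤ mΩ) {X Y h : Ω → E}
    (hX : StronglyMeasurable[m] X) (hX2 : MemLp X 2 P) (hY2 : MemLp Y 2 P)
    (hY : P[Y|m] =ᵐ[P] h) : ∫ ω, ⟪X ω, Y ω⟫ ∂P = ∫ ω, ⟪X ω, h ω⟫ ∂P := by
  rw [← integral_condExp hm]
  refine integral_congr_ae ?_
  filter_upwards [condExp_bilin_of_stronglyMeasurable_left (innerSL ℝ) hX
    (hX2.integrable_inner hY2) (hY2.integrable one_le_two), hY] with ω hpull hω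
  rw [← hω]; exact hpull

theorem integral_norm_sq_eq_add_of_condExp_ae_eq (hm : m ≤ mΩ) {Y h : Ω → E}
    (hh : StronglyMeasurable[m] h) (hh2 : MemLp h 2 P) (hY2 : MemLp Y 2 P)
    (hY : P[Y|m] =ᵐ[P] h) :
    ∫ ω, ‖Y ω‖ ^ 2 ∂P = ∫ ω, ‖h ω‖ ^ 2 ∂P + ∫ ω, ‖Y ω - h ω‖ ^ 2 ∂P := by
  have horth : ∫ ω, ⟪h ω, Y ω - h ω⟫ ∂P = 0 := by
    simp_rw [inner_sub_right]
    rw [integral_sub (hh2.integrable_inner hY2) (hh2.integrable_inner hh2),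
      integral_inner_eq_of_condExp_ae_eq hm hh hh2 hY2 hY, sub_self]
  simpa [horth] using integral_norm_add_sq hh2 (hY2.sub hh2)

theorem integral_norm_sq_smul_add_le (hm : m ≤ mΩ) {X Y h : Ω → E} {β v : ℝ}
    (hX : StronglyMeasurable[m] X) (hX2 : MemLp X 2 P)
    (hh : StronglyMeasurable[m] h) (hh2 : MemLp h 2 P) (hY2 : MemLp Y 2 P)
    (hY : P[Y|m] =ᵐ[P] h) (hvar : ∫ ω, ‖Y ω - h ω‖ ^ 2 ∂P ≤ v) :
    ∫ ω, ‖β • X ω + Y ω‖ ^ 2 ∂P ≤ β ^ 2 * ∫ ω, ‖X ω‖ ^ 2 ∂P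
      + 2 * ∫ ω, ⟪h ω, β • X ω + Y ω⟫ ∂P - ∫ ω, ‖h ω‖ ^ 2 ∂P + v := by
  have hcross : ∫ ω, ⟪β • X ω, Y ω⟫ ∂P = β * ∫ ω, ⟪h ω, X ω⟫ ∂P := by
    simp_rw [real_inner_smul_left]
    rw [integral_const_mul, integral_inner_eq_of_condExp_ae_eq hm hX hX2 hY2 hY]
    simp_rw [real_inner_comm]
  have hdrift : ∫ ω, ⟪h ω, β • X ω + Y ω⟫ ∂P
      = β * ∫ ω, ⟪h ω, X ω⟫ ∂P + ∫ ω, ‖h ω‖ ^ 2 ∂P := by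
    simp_rw [inner_add_right, real_inner_smul_right]
    rw [integral_add ((hh2.integrable_inner hX2).const_mul β) (hh2.integrable_inner hY2),
      integral_const_mul, integral_inner_eq_of_condExp_ae_eq hm hh hh2 hY2 hY]
    simp_rw [real_inner_self_eq_norm_sq]
  have hsmul : ∫ ω, ‖β • X ω‖ ^ 2 ∂P = β ^ 2 * ∫ ω, ‖X ω‖ ^ 2 ∂P := by
    simp_rw [norm_smul, mul_pow, Real.norm_eq_abs, sq_abs]
    exact integral_const_mul _ _
  rw [integral_norm_add_sq (X := fun ω => β • X ω) (hX2.const_smul β) hY2, hcross, hdrift,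
    hsmul, integral_norm_sq_eq_add_of_condExp_ae_eq hm hh hh2 hY2 hY]
  linarith

end MeasureTheory

theorem integral_comp_sub_smul_le {Ω E : Type*} {mΩ : MeasurableSpace Ω} {P : Measure Ω}
    [NormedAddCommGroup E] [InnerProductSpace ℝ E] [CompleteSpace E] {f : E → ℝ} {K : ℝ≥0}
    (hf : Differentiable ℝ f) (hK : LipschitzWith K (gradient f)) {X U : Ω → E} (a : ℝ)
    (hfX : Integrable (fun ω => f (X ω)) P) (hfX' : Integrable (fun ω => f (X ω - a • U ω)) P)
    (hgX : MemLp (fun ω => gradient f (X ω)) 2 P) (hU : MemLp U 2 P) :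
    ∫ ω, f (X ω - a • U ω) ∂P ≤ ∫ ω, f (X ω) ∂P - a * ∫ ω, ⟪gradient f (X ω), U ω⟫ ∂P
      + K / 2 * a ^ 2 * ∫ ω, ‖U ω‖ ^ 2 ∂P := by
  have hinner := (hgX.integrable_inner hU).const_mul a
  have hsq := (hU.integrable_norm_pow two_ne_zero).const_mul (K / 2 * a ^ 2)
  calc ∫ ω, f (X ω - a • U ω) ∂P
      ≤ ∫ ω, (f (X ω) - a * ⟪gradient f (X ω), U ω⟫ + K / 2 * a ^ 2 * ‖U ω‖ ^ 2) ∂P := by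
        refine integral_mono hfX' ((hfX.sub' hinner).fun_add hsq) fun ω => ?_
        have h := le_add_inner_gradient_add_sq_norm hf hK (X ω) (X ω - a • U ω)
        rw [sub_sub_cancel_left, inner_neg_right, real_inner_smul_right, norm_neg, norm_smul,
          mul_pow, Real.norm_eq_abs, sq_abs] at h
        linarith
    _ = _ := by
        rw [integral_add (hfX.sub' hinner) hsq, integral_sub hfX hinner, integral_const_mul,
          integral_const_mul]

theorem sum_mul_le_of_descent {α D M F : ℕ → ℝ} {K Fmin : ℝ}
    (hF : ∀ t, F (t + 1) ≤ F t - α t * D t + K / 2 * α t ^ 2 * M t) (hFmin : ∀ t, Fmin ≤ F t)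
    (T : ℕ) :
    ∑ t ∈ range T, α t * D t ≤ F 0 - Fmin + ∑ t ∈ range T, K / 2 * α t ^ 2 * M t := by
  have htel : ∑ t ∈ range T, (α t * D t - K / 2 * α t ^ 2 * M t)
      ≤ ∑ t ∈ range T, (F t - F (t + 1)) :=
    sum_le_sum fun t _ => by linarith [hF t]
  rw [sum_range_sub', sum_sub_distrib] at htel
  linarith [hFmin T]

theorem sum_mul_le_of_momentum_recursion {α G M D v : ℕ → ℝ} {β c : ℝ}
    (hα : ∀ t, 0 ≤ α t) (hM : ∀ t, 0 ≤ M t) (hαc : ∀ t, α (t + 1) ≤ c * α t)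
    (hcβ : 0 ≤ c * β ^ 2)
    (hM0 : M 0 ≤ 2 * D 0 - G 0 + v 0)
    (hMs : ∀ t, M (t + 1) ≤ β ^ 2 * M t + 2 * D (t + 1) - G (t + 1) + v (t + 1)) (T : ℕ) :
    ∑ t ∈ range T, α t * M t ≤ c * β ^ 2 * ∑ t ∈ range T, α t * M t
      + ∑ t ∈ range T, α t * (2 * D t - G t + v t) := by
  suffices h : ∀ n, ∑ t ∈ range (n + 1), α t * M t ≤ c * β ^ 2 * ∑ t ∈ range n, α t * M t
      + ∑ t ∈ range (n + 1), α t * (2 * D t - G t + v t) by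
    rcases T with _ | n
    · simp
    · have hmono : ∑ t ∈ range n, α t * M t ≤ ∑ t ∈ range (n + 1), α t * M t :=
        sum_le_sum_of_subset_of_nonneg (range_subset_range.2 n.le_succ)
          fun t _ _ => mul_nonneg (hα t) (hM t)
      nlinarith [h n, mul_le_mul_of_nonneg_left hmono hcβ]
  intro n
  induction n with
  | zero => simpa using mul_le_mul_of_nonneg_left hM0 (hα 0)
  | succ n ih =>
    have hstep : α (n + 1) * M (n + 1)
        ≤ c * β ^ 2 * (α n * M n) + α (n + 1) * (2 * D (n + 1) - G (n + 1) + v (n + 1)) := by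
      have hshift : α (n + 1) * (β ^ 2 * M n) ≤ c * β ^ 2 * (α n * M n) := by
        nlinarith [mul_le_mul_of_nonneg_right (hαc n) (mul_nonneg (sq_nonneg β) (hM n))]
      nlinarith [mul_le_mul_of_nonneg_left (hMs n) (hα (n + 1))]
    simp only [sum_range_succ] at ih ⊢
    linarith

theorem sum_mul_le_of_momentum_descent {α G M D F v : ℕ → ℝ} {β c K Fmin : ℝ}
    (hα : ∀ t, 0 ≤ α t) (hM : ∀ t, 0 ≤ M t) (hαc : ∀ t, α (t + 1) ≤ c * α t)
    (hcβ : 0 ≤ c * β ^ 2) (hKα : ∀ t, K * α t ≤ 1 - c * β ^ 2)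
    (hM0 : M 0 ≤ 2 * D 0 - G 0 + v 0)
    (hMs : ∀ t, M (t + 1) ≤ β ^ 2 * M t + 2 * D (t + 1) - G (t + 1) + v (t + 1))
    (hF : ∀ t, F (t + 1) ≤ F t - α t * D t + K / 2 * α t ^ 2 * M t) (hFmin : ∀ t, Fmin ≤ F t)
    (T : ℕ) :
    ∑ t ∈ range T, α t * G t ≤ 2 * (F 0 - Fmin) + ∑ t ∈ range T, α t * v t := by
  have hmom := sum_mul_le_of_momentum_recursion hα hM hαc hcβ hM0 hMs T
  have hdesc := sum_mul_le_of_descent hF hFmin T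
  have hstep : ∑ t ∈ range T, K / 2 * α t ^ 2 * M t
      ≤ (1 - c * β ^ 2) / 2 * ∑ t ∈ range T, α t * M t := by
    rw [mul_sum]
    exact sum_le_sum fun t _ => by
      nlinarith [mul_le_mul_of_nonneg_right (hKα t) (mul_nonneg (hα t) (hM t))]
  simp only [mul_add, mul_sub, sum_add_distrib, sum_sub_distrib, mul_left_comm _ (2 : ℝ),
    ← mul_sum] at hmom
  linarith

theorem inf'_le_div_sum_of_sum_mul_le {ι : Type*} {s : Finset ι} (hs : s.Nonempty)
    {w G : ι → ℝ} {B : ℝ} (hw : ∀ i ∈ s, 0 < w i) (hB : ∑ i ∈ s, w i * G i ≤ B) :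
    s.inf' hs G ≤ B / ∑ i ∈ s, w i := by
  rw [le_div_iff₀ (sum_pos hw hs), mul_sum]
  refine le_trans (sum_le_sum fun i hi => ?_) hB
  rw [mul_comm]
  exact mul_le_mul_of_nonneg_left (inf'_le G hi) (hw i hi).le

/-- **Theorem 1 (general convergence bound), SHB case.**
Under the SHB setup (momentum update `m_t = β m_{t−1} + g_t`, step `θ_{t+1} = θ_t − α_t m_t`,
with `α_{t+1} ≤ c α_t` and `α_t < (1 − cβ²)/L`), for every `T ≥ 1`,
`min_{0≤t≤T−1} E[‖∇f(θ_t)‖²] ≤ 2(f(θ_0) − f*) · B_T + σ² · V_T`, where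
`B_T = 1/∑_{t<T} α_t` and `V_T = (∑_{t<T} α_t/b_t)/(∑_{t<T} α_t)` and `f* = ⨅ x, f x`. -/
theorem shb_general_convergence_bound
    {Ω : Type*} {mΩ : MeasurableSpace Ω} (P : Measure Ω) [IsProbabilityMeasure P]
    (ℱ : ℕ → MeasurableSpace Ω)
    (hℱle : ∀ t, ℱ t ≤ mΩ)
    (d : ℕ) (L : ℝ) (hL : 0 < L)
    (f : EuclideanSpace ℝ (Fin d) → ℝ)
    (hfdiff : Differentiable ℝ f)
    (hflip : LipschitzWith (Real.toNNReal L) (gradient f))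
    (hfbdd : BddBelow (Set.range f))
    (β σ c : ℝ)
    (hc1 : 1 ≤ c)
    (α : ℕ → ℝ) (hα : ∀ t, 0 < α t)
    (hαc : ∀ t, α (t + 1) ≤ c * α t)
    (hαmax : ∀ t, α t < (1 - c * β ^ 2) / L)
    (b : ℕ → ℝ)
    (θ₀ : EuclideanSpace ℝ (Fin d))
    (g θ m : ℕ → Ω → EuclideanSpace ℝ (Fin d))
    (hθ0 : θ 0 = fun _ => θ₀)
    (hm0 : m 0 = g 0)
    (hmrec : ∀ t, m (t + 1) = fun ω => β • m t ω + g (t + 1) ω)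
    (hθrec : ∀ t, θ (t + 1) = fun ω => θ t ω - α t • m t ω)
    (hg2 : ∀ t, MemLp (g t) 2 P)
    (hθmeas : ∀ t, StronglyMeasurable[ℱ t] (θ t))
    (hmmeas : ∀ t, StronglyMeasurable[ℱ (t + 1)] (m t))
    (hgmean : ∀ t, P[g t | ℱ t] =ᵐ[P] fun ω => gradient f (θ t ω))
    (hgvar : ∀ t, ∀ᵐ ω ∂P,
      (P[fun ω' => ‖g t ω' - gradient f (θ t ω')‖ ^ 2 | ℱ t]) ω ≤ σ ^ 2 / b t)
    (hfint : ∀ t, Integrable (fun ω => f (θ t ω)) P)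
    (hgradint : ∀ t, Integrable (fun ω => ‖gradient f (θ t ω)‖ ^ 2) P)
    (hmint : ∀ t, Integrable (fun ω => ‖m t ω‖ ^ 2) P)
    (T : ℕ) (hT : 1 ≤ T) :
    (Finset.range T).inf' (Finset.nonempty_range_iff.mpr (by omega))
        (fun t => ∫ ω, ‖gradient f (θ t ω)‖ ^ 2 ∂P)
      ≤ 2 * (f θ₀ - ⨅ x, f x) * (1 / ∑ t ∈ Finset.range T, α t)
        + σ ^ 2 * ((∑ t ∈ Finset.range T, α t / b t) / ∑ t ∈ Finset.range T, α t) := by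
  have hgrad_meas : ∀ t, StronglyMeasurable[ℱ t] fun ω => gradient f (θ t ω) :=
    fun t => hflip.continuous.comp_stronglyMeasurable (hθmeas t)
  have hgrad2 : ∀ t, MemLp (fun ω => gradient f (θ t ω)) 2 P := fun t =>
    (memLp_two_iff_integrable_sq_norm ((hgrad_meas t).mono (hℱle t)).aestronglyMeasurable).2
      (hgradint t)
  have hm2 : ∀ t, MemLp (m t) 2 P := fun t =>
    (memLp_two_iff_integrable_sq_norm ((hmmeas t).mono (hℱle (t + 1))).aestronglyMeasurable).2
      (hmint t)
  have hvar : ∀ t, ∫ ω, ‖g t ω - gradient f (θ t ω)‖ ^ 2 ∂P ≤ σ ^ 2 / b t :=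
    fun t => integral_le_of_ae_condExp_le (hℱle t) (hgvar t)
  have hmom : ∀ t X, StronglyMeasurable[ℱ t] X → MemLp X 2 P → _ := fun t X hX hX2 =>
    integral_norm_sq_smul_add_le (β := β) (hℱle t) hX hX2 (hgrad_meas t) (hgrad2 t) (hg2 t)
      (hgmean t) (hvar t)
  have hdesc : ∀ t, ∫ ω, f (θ (t + 1) ω) ∂P ≤ ∫ ω, f (θ t ω) ∂P
      - α t * ∫ ω, ⟪gradient f (θ t ω), m t ω⟫ ∂P
      + L.toNNReal / 2 * α t ^ 2 * ∫ ω, ‖m t ω‖ ^ 2 ∂P := fun t => by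
    have hfint' := hfint (t + 1)
    simp only [hθrec] at hfint' ⊢
    exact integral_comp_sub_smul_le hfdiff hflip (α t) (hfint t) hfint' (hgrad2 t) (hm2 t)
  have hfmin : ∀ t, ⨅ x, f x ≤ ∫ ω, f (θ t ω) ∂P := fun t => by
    simpa using integral_mono (integrable_const _) (hfint t) fun ω => ciInf_le hfbdd (θ t ω)
  have hbound := sum_mul_le_of_momentum_descent (K := L.toNNReal) (v := fun t => σ ^ 2 / b t)
    (G := fun t => ∫ ω, ‖gradient f (θ t ω)‖ ^ 2 ∂P) (M := fun t => ∫ ω, ‖m t ω‖ ^ 2 ∂P)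
    (D := fun t => ∫ ω, ⟪gradient f (θ t ω), m t ω⟫ ∂P) (F := fun t => ∫ ω, f (θ t ω) ∂P)
    (fun t => (hα t).le) (fun t => integral_nonneg fun _ => by positivity) hαc
    (mul_nonneg (zero_le_one.trans hc1) (sq_nonneg β))
    (fun t => by rw [Real.coe_toNNReal _ hL.le]; exact ((lt_div_iff₀' hL).1 (hαmax t)).le)
    -- `m 0 = β • 0 + g 0`: the first step is a momentum step from zero momentum
    (by simpa only [hm0, Pi.zero_apply, smul_zero, zero_add, norm_zero,
      zero_pow two_ne_zero, integral_zero, mul_zero] using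
      hmom 0 0 stronglyMeasurable_const MemLp.zero)
    (fun t => by simpa only [hmrec] using hmom (t + 1) (m t) (hmmeas t) (hm2 t)) hdesc hfmin T
  calc _ ≤ (2 * (f θ₀ - ⨅ x, f x) + ∑ t ∈ range T, α t * (σ ^ 2 / b t)) / ∑ t ∈ range T, α t :=
        inf'_le_div_sum_of_sum_mul_le _ (fun t _ => hα t) (by simpa [hθ0] using hbound)
    _ = _ := by simp_rw [mul_div_left_comm _ (σ ^ 2), ← mul_sum]; ring
end

section
/- (Corollary 3.4, constant learning rate with warm-up: deterministic bounds.) Let 1 < γ < δ, λ_0 > 0, b_0 > 0, and let S_0, …, S_M be disjoint consecutive finite sets of natural numbers partitioning {0, …, T−1}, with K_min E_min ≤ |S_m| ≤ K_max E_max for all m, where K_min E_min ≥ 1. Fix a warm-up index M_w ∈ {0, …, M} and set T_w := Σ_{m=0}^{M_w} |S_m| and λ_max := γ^{M_w} λ_0. Define λ_t := γ^m λ_0 for t ∈ S_m with m ≤ M_w, λ_t := λ_max for t ∈ S_m with m > M_w, and b_t := δ^m b_0 for t ∈ S_m. Then, with γ̂ := γ/δ: B_T := 1/(Σ_{t=0}^{T−1}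 λ_t) ≤ δ²/(λ_0 K_min E_min γ^{M_w}) + 1/(λ_max (T − T_w)), and V_T := (Σ_{t=0}^{T−1} λ_t/b_t)/(Σ_{t=0}^{T−1} λ_t) ≤ K_max E_max λ_0 δ² / (K_min E_min b_0 (1 − γ̂) γ^{M_w}) + δ K_max E_max / ((δ − 1) b_0 (T − T_w)). -/
open Finset
open scoped BigOperators

/-- **Corollary 3.4, constant learning rate with warm-up: deterministic bounds.**
Phases `S 0, …, S M` partition `{0,…,T−1}` with `K_min E_min ≤ |S m| ≤ K_max E_max`
(`K_min E_min ≥ 1`).  During the warm-up phases `m ≤ M_w` the learning rate is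
`λ_t = γ^m λ_0` and afterwards it is held at `λ_max = γ^{M_w} λ_0`, while the batch size
is `b_t = δ^m b_0` throughout, `1 < γ < δ`.  With `T_w = ∑_{m≤M_w} |S m|` and
`γ̂ = γ/δ`, the quantities `B_T = 1/∑_{t<T} λ_t` and
`V_T = (∑_{t<T} λ_t/b_t)/(∑_{t<T} λ_t)` satisfy
`B_T ≤ δ²/(λ_0 K_min E_min γ^{M_w}) + 1/(λ_max (T − T_w))` and
`V_T ≤ K_max E_max λ_0 δ²/(K_min E_min b_0 (1−γ̂) γ^{M_w}) + δK_maxE_max/((δ−1)b_0(T−T_w))`. -/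
theorem warmup_constant_lr_BT_VT_bounds
    (γ δ lam₀ b₀ Kmin Emin Kmax Emax : ℝ)
    (hγ : 1 < γ) (hγδ : γ < δ) (hlam₀ : 0 < lam₀) (hb₀ : 0 < b₀)
    (hKmin : 0 < Kmin) (hEmin : 0 < Emin) (hKmax : 0 < Kmax) (hEmax : 0 < Emax)
    (hKE : 1 ≤ Kmin * Emin)
    (T M Mw : ℕ) (hMw : Mw ≤ M)
    (S : ℕ → Finset ℕ)
    (hpart : (Finset.range (M + 1)).biUnion S = Finset.range T)
    (hdisj : ∀ i ≤ M, ∀ j ≤ M, i ≠ j → Disjoint (S i) (S j))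
    (hcardmin : ∀ m, m ≤ M → Kmin * Emin ≤ ((S m).card : ℝ))
    (hcardmax : ∀ m, m ≤ M → ((S m).card : ℝ) ≤ Kmax * Emax)
    (Tw : ℕ) (hTw : Tw = ∑ m ∈ Finset.range (Mw + 1), (S m).card)
    (hTwT : Tw < T)
    (lam b : ℕ → ℝ)
    (hlamwarm : ∀ m, m ≤ Mw → ∀ t ∈ S m, lam t = γ ^ m * lam₀)
    (hlampost : ∀ m, Mw < m → m ≤ M → ∀ t ∈ S m, lam t = γ ^ Mw * lam₀)
    (hbdef : ∀ m, m ≤ M → ∀ t ∈ S m, b t = δ ^ m * b₀) :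
    (1 / ∑ t ∈ Finset.range T, lam t
      ≤ δ ^ 2 / (lam₀ * Kmin * Emin * γ ^ Mw)
        + 1 / ((γ ^ Mw * lam₀) * ((T : ℝ) - (Tw : ℝ)))) ∧
    ((∑ t ∈ Finset.range T, lam t / b t) / (∑ t ∈ Finset.range T, lam t)
      ≤ Kmax * Emax * lam₀ * δ ^ 2 / (Kmin * Emin * b₀ * (1 - γ / δ) * γ ^ Mw)
        + δ * Kmax * Emax / ((δ - 1) * b₀ * ((T : ℝ) - (Tw : ℝ)))) := by
  have hδ : (1:ℝ) < δ := hγ.trans hγδ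
  have hδ0 : (0:ℝ) < δ := lt_trans one_pos hδ
  have hγ0 : (0:ℝ) < γ := lt_trans one_pos hγ
  have hδ1 : (0:ℝ) < δ - 1 := sub_pos.mpr hδ
  have hγhat : (0:ℝ) < 1 - γ / δ := by
    rw [sub_pos]; exact (div_lt_one hδ0).mpr hγδ
  have hPD : Set.PairwiseDisjoint (↑(Finset.range (M+1)) : Set ℕ) S := by
    intro i hi j hj hij
    exact hdisj i (Nat.lt_succ_iff.mp (Finset.mem_range.mp hi)) j
      (Nat.lt_succ_iff.mp (Finset.mem_range.mp hj)) hij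
  have hsplit : ∀ f : ℕ → ℝ, ∑ t ∈ Finset.range T, f t
      = ∑ m ∈ Finset.range (M+1), ∑ t ∈ S m, f t := by
    intro f; rw [← hpart, Finset.sum_biUnion hPD]
  have hTnat : T = ∑ m ∈ Finset.range (M+1), (S m).card := by
    have h := Finset.card_biUnion
      (fun i hi j hj hij => hdisj i (Nat.lt_succ_iff.mp (Finset.mem_range.mp hi)) j
        (Nat.lt_succ_iff.mp (Finset.mem_range.mp hj)) hij)
    rw [hpart, Finset.card_range] at h
    exact h
  have hle : Mw + 1 ≤ M + 1 := Nat.succ_le_succ hMw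
  have hTsplit : Tw + ∑ m ∈ Finset.Ico (Mw+1) (M+1), (S m).card = T := by
    rw [hTw, Finset.sum_range_add_sum_Ico _ hle, hTnat]
  have hIcoCard : ∑ m ∈ Finset.Ico (Mw+1) (M+1), ((S m).card : ℝ)
      = (T:ℝ) - (Tw:ℝ) := by
    have h := congrArg (Nat.cast : ℕ → ℝ) hTsplit
    push_cast at h
    linarith [h]
  have hTTw : (0:ℝ) < (T:ℝ) - (Tw:ℝ) := by
    have : (Tw:ℝ) < (T:ℝ) := by exact_mod_cast hTwT
    linarith
  have hP0 : (0:ℝ) < γ ^ Mw * lam₀ * ((T:ℝ) - (Tw:ℝ)) := by positivity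
  -- lower bound on the sum of learning rates
  have hLlow : γ ^ Mw * lam₀ * ((T:ℝ) - (Tw:ℝ)) ≤ ∑ t ∈ Finset.range T, lam t := by
    rw [hsplit lam, ← Finset.sum_range_add_sum_Ico _ hle]
    have h1 : 0 ≤ ∑ m ∈ Finset.range (Mw+1), ∑ t ∈ S m, lam t := by
      apply Finset.sum_nonneg; intro m hm
      apply Finset.sum_nonneg; intro t ht
      rw [hlamwarm m (Nat.lt_succ_iff.mp (Finset.mem_range.mp hm)) t ht]
      positivity
    have h2 : ∑ m ∈ Finset.Ico (Mw+1) (M+1), ∑ t ∈ S m, lam t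
        = γ ^ Mw * lam₀ * ((T:ℝ) - (Tw:ℝ)) := by
      have hc : ∀ m ∈ Finset.Ico (Mw+1) (M+1), ∑ t ∈ S m, lam t
          = ((S m).card : ℝ) * (γ ^ Mw * lam₀) := by
        intro m hm
        obtain ⟨h1', h2'⟩ := Finset.mem_Ico.mp hm
        rw [Finset.sum_congr rfl (hlampost m h1' (Nat.lt_succ_iff.mp h2')),
          Finset.sum_const, nsmul_eq_mul]
      rw [Finset.sum_congr rfl hc, ← Finset.sum_mul, hIcoCard]
      ring
    linarith [h1, h2]
  have hL0 : (0:ℝ) < ∑ t ∈ Finset.range T, lam t := lt_of_lt_of_le hP0 hLlow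
  constructor
  · have h1 : 1 / (∑ t ∈ Finset.range T, lam t)
        ≤ 1 / (γ ^ Mw * lam₀ * ((T:ℝ) - (Tw:ℝ))) :=
      one_div_le_one_div_of_le hP0 hLlow
    have h2 : (0:ℝ) ≤ δ ^ 2 / (lam₀ * Kmin * Emin * γ ^ Mw) := by positivity
    calc 1 / ∑ t ∈ Finset.range T, lam t
        ≤ 1 / (γ ^ Mw * lam₀ * ((T:ℝ) - (Tw:ℝ))) := h1
      _ ≤ δ ^ 2 / (lam₀ * Kmin * Emin * γ ^ Mw)
          + 1 / ((γ ^ Mw * lam₀) * ((T:ℝ) - (Tw:ℝ))) :=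
        le_add_of_nonneg_left h2
  · -- bound the numerator
    have hδne : (δ:ℝ) ≠ 0 := hδ0.ne'
    have hb₀ne : (b₀:ℝ) ≠ 0 := hb₀.ne'
    have hgeom : ∑ m ∈ Finset.range (M+1), ((δ:ℝ)⁻¹) ^ m ≤ δ / (δ - 1) := by
      have hr : (δ:ℝ)⁻¹ < 1 := inv_lt_one_of_one_lt₀ hδ
      have hpos : (0:ℝ) < 1 - δ⁻¹ := by linarith
      have hmul := geom_sum_mul ((δ:ℝ)⁻¹) (M+1)
      have hid : (∑ m ∈ Finset.range (M+1), ((δ:ℝ)⁻¹) ^ m) * (1 - δ⁻¹)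
          = 1 - ((δ:ℝ)⁻¹) ^ (M+1) := by linear_combination -hmul
      have h2 : (0:ℝ) ≤ ((δ:ℝ)⁻¹) ^ (M+1) := by positivity
      have h3 : ∑ m ∈ Finset.range (M+1), ((δ:ℝ)⁻¹) ^ m ≤ 1 / (1 - δ⁻¹) := by
        rw [le_div_iff₀ hpos]
        linarith [hid]
      have h4 : (1:ℝ) / (1 - δ⁻¹) = δ / (δ - 1) := by
        rw [div_eq_div_iff (by linarith) (by linarith)]
        field_simp
      linarith [h3, h4.le]
    have hnum : ∑ t ∈ Finset.range T, lam t / b t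
        ≤ Kmax * Emax * (γ ^ Mw * lam₀ / b₀) * (δ / (δ - 1)) := by
      rw [hsplit (fun t => lam t / b t)]
      have hterm : ∀ m ∈ Finset.range (M+1), ∑ t ∈ S m, lam t / b t
          ≤ Kmax * Emax * (γ ^ Mw * lam₀ / b₀) * ((δ:ℝ)⁻¹) ^ m := by
        intro m hm
        have hmM : m ≤ M := Nat.lt_succ_iff.mp (Finset.mem_range.mp hm)
        have hlamle : ∀ t ∈ S m, lam t ≤ γ ^ Mw * lam₀ := by
          intro t ht
          by_cases h : m ≤ Mw
          · rw [hlamwarm m h t ht]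
            exact mul_le_mul_of_nonneg_right (pow_le_pow_right₀ hγ.le h) hlam₀.le
          · rw [hlampost m (Nat.lt_of_not_le h) hmM t ht]
        have hbval : ∀ t ∈ S m, lam t / b t ≤ γ ^ Mw * lam₀ / (δ ^ m * b₀) := by
          intro t ht
          rw [hbdef m hmM t ht]
          exact (div_le_div_iff_of_pos_right (by positivity)).mpr (hlamle t ht)
        calc ∑ t ∈ S m, lam t / b t
            ≤ ∑ _t ∈ S m, γ ^ Mw * lam₀ / (δ ^ m * b₀) := Finset.sum_le_sum hbval
          _ = ((S m).card : ℝ) * (γ ^ Mw * lam₀ / (δ ^ m * b₀)) := by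
              rw [Finset.sum_const, nsmul_eq_mul]
          _ ≤ Kmax * Emax * (γ ^ Mw * lam₀ / (δ ^ m * b₀)) :=
              mul_le_mul_of_nonneg_right (hcardmax m hmM) (by positivity)
          _ = Kmax * Emax * (γ ^ Mw * lam₀ / b₀) * ((δ:ℝ)⁻¹) ^ m := by
              rw [inv_pow]
              have hδm : (δ:ℝ) ^ m ≠ 0 := by positivity
              field_simp
      calc ∑ m ∈ Finset.range (M+1), ∑ t ∈ S m, lam t / b t
          ≤ ∑ m ∈ Finset.range (M+1),
              Kmax * Emax * (γ ^ Mw * lam₀ / b₀) * ((δ:ℝ)⁻¹) ^ m :=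
            Finset.sum_le_sum hterm
        _ = Kmax * Emax * (γ ^ Mw * lam₀ / b₀)
              * ∑ m ∈ Finset.range (M+1), ((δ:ℝ)⁻¹) ^ m := by
            rw [Finset.mul_sum]
        _ ≤ Kmax * Emax * (γ ^ Mw * lam₀ / b₀) * (δ / (δ - 1)) :=
            mul_le_mul_of_nonneg_left hgeom (by positivity)
    have hmain : (∑ t ∈ Finset.range T, lam t / b t) / (∑ t ∈ Finset.range T, lam t)
        ≤ (Kmax * Emax * (γ ^ Mw * lam₀ / b₀) * (δ / (δ - 1)))
            / (γ ^ Mw * lam₀ * ((T:ℝ) - (Tw:ℝ))) :=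
      div_le_div₀ (by positivity) hnum hP0 hLlow
    have heq : (Kmax * Emax * (γ ^ Mw * lam₀ / b₀) * (δ / (δ - 1)))
          / (γ ^ Mw * lam₀ * ((T:ℝ) - (Tw:ℝ)))
        = δ * Kmax * Emax / ((δ - 1) * b₀ * ((T:ℝ) - (Tw:ℝ))) := by
      have hγm : (γ:ℝ) ^ Mw ≠ 0 := by positivity
      have hT' : ((T:ℝ) - (Tw:ℝ)) ≠ 0 := hTTw.ne'
      have hδ1' : (δ:ℝ) - 1 ≠ 0 := hδ1.ne'
      field_simp
    have h2 : (0:ℝ) ≤ Kmax * Emax * lam₀ * δ ^ 2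
        / (Kmin * Emin * b₀ * (1 - γ / δ) * γ ^ Mw) := by positivity
    rw [heq] at hmain
    linarith [hmain, h2]
end
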